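/- arXiv:1904.12158 — 5 statements merged into one kernel-verified Lean document; each statement's English description precedes it below -/
import Mathlib

section
/- Low-frequency stagnation of the classical Schwarz method (Theorem 2.2, first case): for every Fourier frequency k with 0 ≤ k < ω/Cp and every overlap δ > 0, both roots r₊, r₋ of the quadratic Q(z) = z² − (X² + 2Y)z + Y² have modulus exactly equal to 1; consequently the convergence factor satisfies ρ_cla(k) = max(|r₊|, |r₋|) = 1 and the classical Schwarz method stagnates on these frequencies. -/
/-!
For `0 ≤ k < ω/Cp` both radicands are negative, so `λ₁ = a i` and `λ₂ = b i` with `a, b ≥ 0`.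
Then `(k² + λ₁λ₂)/(k² − λ₁λ₂) = (k² − ab)/(k² + ab) =: t` is real with `t² ≤ 1`,
`Y = e^{−i(a+b)δ}` is unimodular and `(e^{−iaδ} − e^{−ibδ})² = (2 cos((a−b)δ) − 2) Y`, so
`X² + 2Y = cY` with `c = 2 + t² (2 cos((a−b)δ) − 2) ∈ [−2, 2]`. Thus `Q(z) = z² − cYz + Y²`, and
`z / Y` is a root of the real quadratic `w² − cw + 1`, whose discriminant `c² − 4` is nonpositive,
so its roots `(c ± i√(4 − c²))/2` are unimodular.
-/

noncomputable section

open Complex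

/-- `λ₁ = √(k² − ω²/Cs²)`, principal branch of the complex square root. -/
def lam1 (ω Cs k : ℝ) : ℂ := ((k ^ 2 - ω ^ 2 / Cs ^ 2 : ℝ) : ℂ) ^ ((1 : ℂ) / 2)

/-- `λ₂ = √(k² − ω²/Cp²)`, principal branch of the complex square root. -/
def lam2 (ω Cp k : ℝ) : ℂ := ((k ^ 2 - ω ^ 2 / Cp ^ 2 : ℝ) : ℂ) ^ ((1 : ℂ) / 2)

/-- `X = ((k² + λ₁λ₂)/(k² − λ₁λ₂))(e^{−λ₁δ} − e^{−λ₂δ})` of the classical Schwarz method. -/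
def Xcla (ω Cs Cp k δ : ℝ) : ℂ :=
  (((k : ℂ) ^ 2 + lam1 ω Cs k * lam2 ω Cp k) / ((k : ℂ) ^ 2 - lam1 ω Cs k * lam2 ω Cp k)) *
    (Complex.exp (-(lam1 ω Cs k) * (δ : ℂ)) - Complex.exp (-(lam2 ω Cp k) * (δ : ℂ)))

/-- `Y = e^{−δ(λ₁+λ₂)}` of the classical Schwarz method. -/
def Ycla (ω Cs Cp k δ : ℝ) : ℂ :=
  Complex.exp (-(δ : ℂ) * (lam1 ω Cs k + lam2 ω Cp k))

/-- The quadratic `Q(z) = z² − (X² + 2Y)z + Y²` whose roots are the eigenvalues `r±`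
of the double-iteration operator of the classical overlapping Schwarz method. -/
def Qcla (ω Cs Cp k δ : ℝ) (z : ℂ) : ℂ :=
  z ^ 2 - ((Xcla ω Cs Cp k δ) ^ 2 + 2 * Ycla ω Cs Cp k δ) * z + (Ycla ω Cs Cp k δ) ^ 2

theorem Complex.ofReal_cpow_half_of_neg {x : ℝ} (hx : x < 0) :
    (x : ℂ) ^ ((1 : ℂ) / 2) = (√(-x) : ℂ) * I := by
  have hI : exp (Real.pi * I * (1 / 2)) = I := by
    rw [show (Real.pi : ℂ) * I * (1 / 2) = (Real.pi / 2 : ℂ) * I by ring, ← cos_add_sin_I,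
      cos_pi_div_two, sin_pi_div_two]
    ring
  rw [ofReal_cpow_of_nonpos hx.le, hI, ← ofReal_neg, Real.sqrt_eq_rpow,
    ofReal_cpow (by linarith)]
  norm_num

theorem sq_exp_neg_mul_I_sub_exp_neg_mul_I (A B : ℂ) :
    (exp (-A * I) - exp (-B * I)) ^ 2 = (2 * cos (A - B) - 2) * exp (-(A + B) * I) := by
  have hAB : exp (-A * I) * exp (-B * I) = exp (-(A + B) * I) := by
    rw [← exp_add]; ring_nf
  have hB : exp ((A - B) * I) * exp (-(A + B) * I) = exp (-B * I) ^ 2 := by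
    rw [← exp_add, sq, ← exp_add]; ring_nf
  have hA : exp (-(A - B) * I) * exp (-(A + B) * I) = exp (-A * I) ^ 2 := by
    rw [← exp_add, sq, ← exp_add]; ring_nf
  rw [two_cos]
  linear_combination -hA - hB - 2 * hAB

theorem norm_eq_one_of_sq_sub_mul_add_one_eq_zero {c : ℝ} (hc : |c| ≤ 2) {w : ℂ}
    (hw : w ^ 2 - c * w + 1 = 0) : ‖w‖ = 1 := by
  have hre : w.re ^ 2 - w.im ^ 2 - c * w.re + 1 = 0 := by
    simpa [sq] using congrArg re hw
  have him : w.im * (2 * w.re - c) = 0 := by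
    have := congrArg im hw
    simp only [sq, add_im, sub_im, mul_im, ofReal_re, ofReal_im, zero_mul, add_zero, one_im,
      zero_im] at this
    linear_combination this
  rw [norm_def, Real.sqrt_eq_one, normSq_apply]
  rcases mul_eq_zero.mp him with him | hc'
  · have hc2 : c ^ 2 ≤ 4 := by nlinarith [abs_le.mp hc]
    rw [him] at hre ⊢
    nlinarith [sq_nonneg (2 * w.re - c)]
  · linear_combination -hre + w.re * hc'

theorem norm_eq_norm_of_sq_sub_mul_mul_add_sq_eq_zero {c : ℝ} (hc : |c| ≤ 2) {Y z : ℂ}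
    (hY : Y ≠ 0) (h : z ^ 2 - c * Y * z + Y ^ 2 = 0) : ‖z‖ = ‖Y‖ := by
  have hw : (z / Y) ^ 2 - c * (z / Y) + 1 = 0 := by
    field_simp
    linear_combination h
  have := norm_eq_one_of_sq_sub_mul_add_one_eq_zero hc hw
  rwa [norm_div, div_eq_one_iff_eq (norm_ne_zero_iff.mpr hY)] at this

theorem sq_sub_div_add_le_one {p q : ℝ} (hp : 0 ≤ p) (hq : 0 ≤ q) :
    ((p - q) / (p + q)) ^ 2 ≤ 1 := by
  rw [div_pow]
  exact div_le_one_of_le₀ (by nlinarith [mul_nonneg hp hq]) (sq_nonneg _)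

theorem abs_two_add_mul_two_mul_cos_sub_two_le {s : ℝ} (hs₀ : 0 ≤ s) (hs₁ : s ≤ 1) (θ : ℝ) :
    |2 + s * (2 * Real.cos θ - 2)| ≤ 2 := by
  have h₁ := Real.neg_one_le_cos θ
  have h₂ := Real.cos_le_one θ
  rw [abs_le]
  constructor <;> nlinarith

theorem lam1_eq_sqrt_mul_I {ω Cs k : ℝ} (hk : k ^ 2 < ω ^ 2 / Cs ^ 2) :
    lam1 ω Cs k = (√(ω ^ 2 / Cs ^ 2 - k ^ 2) : ℂ) * I := by
  rw [lam1, Complex.ofReal_cpow_half_of_neg (by linarith), neg_sub]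

theorem lam2_eq_sqrt_mul_I {ω Cp k : ℝ} (hk : k ^ 2 < ω ^ 2 / Cp ^ 2) :
    lam2 ω Cp k = (√(ω ^ 2 / Cp ^ 2 - k ^ 2) : ℂ) * I := by
  rw [lam2, Complex.ofReal_cpow_half_of_neg (by linarith), neg_sub]

section PurelyImaginary

variable {ω Cs Cp k δ a b : ℝ}

theorem Ycla_eq_exp_mul_I (h₁ : lam1 ω Cs k = a * I) (h₂ : lam2 ω Cp k = b * I) :
    Ycla ω Cs Cp k δ = exp (↑(-(a + b) * δ) * I) := by
  rw [Ycla, h₁, h₂]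
  push_cast
  ring_nf

theorem Xcla_sq_add_two_mul_Ycla (h₁ : lam1 ω Cs k = a * I) (h₂ : lam2 ω Cp k = b * I) :
    Xcla ω Cs Cp k δ ^ 2 + 2 * Ycla ω Cs Cp k δ =
      ((2 + ((k ^ 2 - a * b) / (k ^ 2 + a * b)) ^ 2 * (2 * Real.cos ((a - b) * δ) - 2) : ℝ) : ℂ) *
        Ycla ω Cs Cp k δ := by
  have hfrac : ((k : ℂ) ^ 2 + a * I * (b * I)) / ((k : ℂ) ^ 2 - a * I * (b * I)) =
      ((k ^ 2 - a * b) / (k ^ 2 + a * b) : ℝ) := by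
    push_cast
    ring_nf
    rw [I_sq]
    ring_nf
  have hexp := sq_exp_neg_mul_I_sub_exp_neg_mul_I (a * δ) (b * δ)
  rw [Xcla, Ycla, h₁, h₂, hfrac, mul_pow, show -(a * I) * δ = -(a * δ : ℂ) * I by ring,
    show -(b * I) * δ = -(b * δ : ℂ) * I by ring,
    show -(δ : ℂ) * (a * I + b * I) = -(a * δ + b * δ : ℂ) * I by ring, hexp]
  push_cast
  ring_nf

theorem norm_Ycla (h₁ : lam1 ω Cs k = a * I) (h₂ : lam2 ω Cp k = b * I) :
    ‖Ycla ω Cs Cp k δ‖ = 1 := by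
  rw [Ycla_eq_exp_mul_I h₁ h₂, norm_exp_ofReal_mul_I]

theorem norm_eq_one_of_Qcla_eq_zero (h₁ : lam1 ω Cs k = a * I) (h₂ : lam2 ω Cp k = b * I)
    (hab : 0 ≤ a * b) {z : ℂ} (hz : Qcla ω Cs Cp k δ z = 0) : ‖z‖ = 1 := by
  have hY := norm_Ycla (δ := δ) h₁ h₂
  have hc := abs_two_add_mul_two_mul_cos_sub_two_le (sq_nonneg _)
    (sq_sub_div_add_le_one (sq_nonneg k) hab) ((a - b) * δ)
  rw [← hY]
  refine norm_eq_norm_of_sq_sub_mul_mul_add_sq_eq_zero hc (norm_ne_zero_iff.mp (by simp [hY])) ?_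
  rw [Qcla, Xcla_sq_add_two_mul_Ycla h₁ h₂] at hz
  linear_combination hz

end PurelyImaginary

theorem classical_schwarz_low_frequency_stagnation_general
    (ω Cs Cp k δ : ℝ)
    (hCs : 0 < Cs) (hCsCp : Cs < Cp)
    (hk0 : 0 ≤ k) (hk : k < ω / Cp) :
    ∀ z : ℂ, Qcla ω Cs Cp k δ z = 0 → ‖z‖ = 1 := by
  have hkp : k ^ 2 < ω ^ 2 / Cp ^ 2 := by
    rw [← div_pow]
    exact pow_lt_pow_left₀ hk hk0 two_ne_zero
  have hks : k ^ 2 < ω ^ 2 / Cs ^ 2 :=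
    hkp.trans_le (div_le_div_of_nonneg_left (sq_nonneg ω) (by positivity) (by gcongr))
  intro z hz
  exact norm_eq_one_of_Qcla_eq_zero (lam1_eq_sqrt_mul_I hks) (lam2_eq_sqrt_mul_I hkp)
    (mul_nonneg (Real.sqrt_nonneg _) (Real.sqrt_nonneg _)) hz

/-- **Theorem 2.2, first case**: for `0 ≤ k < ω/Cp` and any overlap `δ > 0`, both roots of
`Q(z) = z² − (X² + 2Y)z + Y²` have modulus exactly `1`, so `ρ_cla(k) = 1` and the classical
Schwarz method stagnates on these frequencies. -/
theorem classical_schwarz_low_frequency_stagnation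
    (ω Cs Cp k δ : ℝ)
    (hω : 0 < ω) (hCs : 0 < Cs) (hCsCp : Cs < Cp) (hCp2 : 2 * Cs ^ 2 < Cp ^ 2)
    (hk0 : 0 ≤ k) (hk : k < ω / Cp) (hδ : 0 < δ) :
    ∀ z : ℂ, Qcla ω Cs Cp k δ z = 0 → ‖z‖ = 1 :=
  classical_schwarz_low_frequency_stagnation_general ω Cs Cp k δ hCs hCsCp hk0 hk

end
end

section
/- Stagnation of the classical Schwarz method at the pressure-wave cutoff (Theorem 2.2, k = ω/Cp): at k = ω/Cp one has λ₂ = 0 and λ₁ = i·λ̄₁ with λ̄₁ = ω√(Cp² − Cs²)/(Cp·Cs) > 0, and for every overlap δ > 0 the two roots of the quadratic Q(z) = z² − (X² + 2Y)z + Y² are exactly 1 and e^{−2iλ̄₁δ}; in particular both roots have modulus 1 and ρ_cla(ω/Cp) = 1. -/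
noncomputable section

open Complex

/-!
At `k = ω/Cp` the pressure root `λ₂` vanishes, so the impedance factor `(k² + λ₁λ₂)/(k² − λ₁λ₂)`
equals `1` and, writing `b = e^{−λ₁δ}`, one gets `X = b − 1`, `Y = b`. Then
`X² + 2Y = 1 + b²` and `Q(z) = (z − 1)(z − b²)`. Since `k < ω/Cs`, the shear root
`λ₁ = i·λ̄₁` is purely imaginary, so `b² = e^{−2iλ̄₁δ}` lies on the unit circle.
-/

theorem Complex.ofReal_cpow_one_half_of_neg {x : ℝ} (hx : x < 0) :
    (x : ℂ) ^ ((1 : ℂ) / 2) = I * (Real.sqrt (-x) : ℂ) := by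
  have hexp : exp (Real.pi * I * ((1 : ℂ) / 2)) = I := by
    rw [show (Real.pi : ℂ) * I * ((1 : ℂ) / 2) = ((Real.pi / 2 : ℝ) : ℂ) * I by push_cast; ring,
      exp_mul_I, ← ofReal_cos, ← ofReal_sin, Real.cos_pi_div_two, Real.sin_pi_div_two]
    simp
  have hsqrt : ((-x : ℝ) : ℂ) ^ ((1 : ℂ) / 2) = (Real.sqrt (-x) : ℂ) := by
    rw [Real.sqrt_eq_rpow, ofReal_cpow (by linarith)]
    push_cast
    ring_nf
  rw [ofReal_cpow_of_nonpos hx.le, ← ofReal_neg, hsqrt, hexp, mul_comm]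

theorem Complex.ofReal_neg_sq_cpow_one_half {a : ℝ} (ha : 0 < a) :
    ((-a ^ 2 : ℝ) : ℂ) ^ ((1 : ℂ) / 2) = I * a := by
  rw [ofReal_cpow_one_half_of_neg (by nlinarith), neg_neg, Real.sqrt_sq ha.le]

section Cutoff

variable {ω Cs Cp : ℝ}

/-- The real shear wave number `λ̄₁` at the pressure cutoff. -/
def shearCutoff (ω Cs Cp : ℝ) : ℝ := ω * Real.sqrt (Cp ^ 2 - Cs ^ 2) / (Cp * Cs)

theorem shearCutoff_pos (hω : 0 < ω) (hCs : 0 < Cs) (hCsCp : Cs < Cp) :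
    0 < shearCutoff ω Cs Cp := by
  have hCp : 0 < Cp := hCs.trans hCsCp
  have hroot : 0 < Real.sqrt (Cp ^ 2 - Cs ^ 2) := Real.sqrt_pos.2 (by nlinarith)
  unfold shearCutoff
  positivity

theorem lam2_pressureCutoff : lam2 ω Cp (ω / Cp) = 0 := by
  rw [lam2, div_pow, sub_self, ofReal_zero, zero_cpow (by norm_num)]

theorem lam1_pressureCutoff (hω : 0 < ω) (hCs : 0 < Cs) (hCsCp : Cs < Cp) :
    lam1 ω Cs (ω / Cp) = I * (shearCutoff ω Cs Cp : ℂ) := by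
  have hCp : 0 < Cp := hCs.trans hCsCp
  have hradicand : (ω / Cp) ^ 2 - ω ^ 2 / Cs ^ 2 = -shearCutoff ω Cs Cp ^ 2 := by
    rw [shearCutoff, div_pow, div_pow, mul_pow, mul_pow, Real.sq_sqrt (by nlinarith)]
    field_simp
    ring
  rw [lam1, hradicand, ofReal_neg_sq_cpow_one_half (shearCutoff_pos hω hCs hCsCp)]

end Cutoff

theorem norm_exp_neg_two_mul_I_mul_ofReal (x δ : ℝ) : ‖exp (-2 * I * x * δ)‖ = 1 := by
  rw [show -2 * I * x * δ = ((-2 * x * δ : ℝ) : ℂ) * I by push_cast; ring,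
    norm_exp_ofReal_mul_I]

theorem sub_one_sq_quadratic_eq_zero_iff (b z : ℂ) :
    z ^ 2 - ((b - 1) ^ 2 + 2 * b) * z + b ^ 2 = 0 ↔ z = 1 ∨ z = b ^ 2 := by
  rw [show z ^ 2 - ((b - 1) ^ 2 + 2 * b) * z + b ^ 2 = (z - 1) * (z - b ^ 2) by ring,
    mul_eq_zero, sub_eq_zero, sub_eq_zero]

theorem Qcla_eq_zero_iff_of_lam2_eq_zero {ω Cs Cp k δ : ℝ} (hk : k ≠ 0)
    (hlam2 : lam2 ω Cp k = 0) (z : ℂ) :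
    Qcla ω Cs Cp k δ z = 0 ↔ z = 1 ∨ z = exp (-(lam1 ω Cs k) * δ) ^ 2 := by
  have hk2 : (k : ℂ) ^ 2 ≠ 0 := pow_ne_zero 2 (ofReal_ne_zero.2 hk)
  have hX : Xcla ω Cs Cp k δ = exp (-(lam1 ω Cs k) * δ) - 1 := by
    simp [Xcla, hlam2, hk2]
  have hY : Ycla ω Cs Cp k δ = exp (-(lam1 ω Cs k) * δ) := by
    rw [Ycla, hlam2, add_zero]
    ring_nf
  rw [Qcla, hX, hY, sub_one_sq_quadratic_eq_zero_iff]

theorem classical_schwarz_pressure_cutoff_stagnation_general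
    (ω Cs Cp k δ : ℝ)
    (hω : 0 < ω) (hCs : 0 < Cs) (hCsCp : Cs < Cp)
    (hk : k = ω / Cp) :
    0 < ω * Real.sqrt (Cp ^ 2 - Cs ^ 2) / (Cp * Cs) ∧
    lam2 ω Cp k = 0 ∧
    lam1 ω Cs k = Complex.I * ((ω * Real.sqrt (Cp ^ 2 - Cs ^ 2) / (Cp * Cs) : ℝ) : ℂ) ∧
    (∀ z : ℂ, Qcla ω Cs Cp k δ z = 0 ↔
      z = 1 ∨
      z = Complex.exp (-2 * Complex.I *
            ((ω * Real.sqrt (Cp ^ 2 - Cs ^ 2) / (Cp * Cs) : ℝ) : ℂ) * (δ : ℂ))) ∧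
    ‖Complex.exp (-2 * Complex.I *
        ((ω * Real.sqrt (Cp ^ 2 - Cs ^ 2) / (Cp * Cs) : ℝ) : ℂ) * (δ : ℂ))‖ = 1 := by
  subst hk
  have hCp : 0 < Cp := hCs.trans hCsCp
  have hlam1 := lam1_pressureCutoff hω hCs hCsCp
  have hlam2 := lam2_pressureCutoff (ω := ω) (Cp := Cp)
  have hexp : exp (-(lam1 ω Cs (ω / Cp)) * δ) ^ 2
      = exp (-2 * I * (shearCutoff ω Cs Cp : ℂ) * δ) := by
    rw [← exp_nat_mul, hlam1]
    ring_nf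
  refine ⟨shearCutoff_pos hω hCs hCsCp, hlam2, hlam1, fun z => ?_, ?_⟩
  · rw [Qcla_eq_zero_iff_of_lam2_eq_zero (by positivity) hlam2, hexp, shearCutoff]
  · exact norm_exp_neg_two_mul_I_mul_ofReal _ _

/-- **Theorem 2.2, k = ω/Cp**: at the pressure-wave cutoff one has `λ₂ = 0` and
`λ₁ = i·λ̄₁` with `λ̄₁ = ω√(Cp² − Cs²)/(Cp·Cs) > 0`, and for every overlap `δ > 0` the two
roots of `Q(z) = z² − (X² + 2Y)z + Y²` are exactly `1` and `e^{−2iλ̄₁δ}`; in particular both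
roots have modulus `1` and `ρ_cla(ω/Cp) = 1`. -/
theorem classical_schwarz_pressure_cutoff_stagnation
    (ω Cs Cp k δ : ℝ)
    (hω : 0 < ω) (hCs : 0 < Cs) (hCsCp : Cs < Cp) (hCp2 : 2 * Cs ^ 2 < Cp ^ 2)
    (hk : k = ω / Cp) (hδ : 0 < δ) :
    0 < ω * Real.sqrt (Cp ^ 2 - Cs ^ 2) / (Cp * Cs) ∧
    lam2 ω Cp k = 0 ∧
    lam1 ω Cs k = Complex.I * ((ω * Real.sqrt (Cp ^ 2 - Cs ^ 2) / (Cp * Cs) : ℝ) : ℂ) ∧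
    (∀ z : ℂ, Qcla ω Cs Cp k δ z = 0 ↔
      z = 1 ∨
      z = Complex.exp (-2 * Complex.I *
            ((ω * Real.sqrt (Cp ^ 2 - Cs ^ 2) / (Cp * Cs) : ℝ) : ℂ) * (δ : ℂ))) ∧
    ‖Complex.exp (-2 * Complex.I *
        ((ω * Real.sqrt (Cp ^ 2 - Cs ^ 2) / (Cp * Cs) : ℝ) : ℂ) * (δ : ℂ))‖ = 1 :=
  classical_schwarz_pressure_cutoff_stagnation_general ω Cs Cp k δ hω hCs hCsCp hk

end
end

section
/- Stagnation of the classical Schwarz method at the shear-wave cutoff (Theorem 2.2, k = ω/Cs): at k = ω/Cs one has λ₁ = 0 and λ₂ = ω√(Cp² − Cs²)/(Cp·Cs) > 0, and for every overlap δ > 0 the two roots of the quadratic Q(z) = z² − (X² + 2Y)z + Y² are exactly 1 and e^{−2λ₂δ}; in particular ρ_cla(ω/Cs) = max(1, e^{−2λ₂δ}) = 1 while the second root satisfies 0 < e^{−2λ₂δ} < 1. -/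
/-!
At the shear-wave cutoff `k = ω/Cs` the radicand of `λ₁` vanishes, so `λ₁ = 0`, while
`k² − ω²/Cp² = ω²(Cp² − Cs²)/(Cp²Cs²)` is the square of a positive real, so `λ₂` is that positive
real. With `λ₁ = 0` and `w = e^{−λ₂δ}` one gets `X = 1 − w` and `Y = w`, hence
`X² + 2Y = 1 + w²` and `Q(z) = (z − 1)(z − w²)`: the root `1` makes the method stagnate.
-/

noncomputable section

open Complex

theorem Complex.ofReal_cpow_one_half {x : ℝ} (hx : 0 ≤ x) :
    (x : ℂ) ^ ((1 : ℂ) / 2) = (√x : ℂ) := by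
  rw [Real.sqrt_eq_rpow, Complex.ofReal_cpow hx]
  norm_num

theorem sq_sub_one_sub_sq_add_two_mul_add_sq_eq_zero_iff {K : Type*} [Field K] (w z : K) :
    z ^ 2 - ((1 - w) ^ 2 + 2 * w) * z + w ^ 2 = 0 ↔ z = 1 ∨ z = w ^ 2 := by
  have hfactor : z ^ 2 - ((1 - w) ^ 2 + 2 * w) * z + w ^ 2 = (z - 1) * (z - w ^ 2) := by ring
  rw [hfactor, mul_eq_zero, sub_eq_zero, sub_eq_zero]

theorem lam1_shear_cutoff (ω Cs : ℝ) : lam1 ω Cs (ω / Cs) = 0 := by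
  rw [lam1, div_pow, sub_self, Complex.ofReal_cpow_one_half le_rfl, Real.sqrt_zero,
    Complex.ofReal_zero]

section ShearCutoff

variable {ω Cs Cp : ℝ}

theorem shear_cutoff_lam2_pos (hω : 0 < ω) (hCs : 0 < Cs) (hCsCp : Cs < Cp) :
    0 < ω * √(Cp ^ 2 - Cs ^ 2) / (Cp * Cs) := by
  have hCp : 0 < Cp := hCs.trans hCsCp
  have hsqrt : 0 < √(Cp ^ 2 - Cs ^ 2) := Real.sqrt_pos.mpr (by nlinarith)
  positivity

theorem lam2_shear_cutoff (hω : 0 ≤ ω) (hCs : 0 < Cs) (hCsCp : Cs ≤ Cp) :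
    lam2 ω Cp (ω / Cs) = ((ω * √(Cp ^ 2 - Cs ^ 2) / (Cp * Cs) : ℝ) : ℂ) := by
  have hCp : 0 < Cp := hCs.trans_le hCsCp
  have hradicand : (ω / Cs) ^ 2 - ω ^ 2 / Cp ^ 2 = (ω * √(Cp ^ 2 - Cs ^ 2) / (Cp * Cs)) ^ 2 := by
    rw [div_pow, div_pow, mul_pow, mul_pow, Real.sq_sqrt (by nlinarith)]
    field_simp
  rw [lam2, hradicand, Complex.ofReal_cpow_one_half (sq_nonneg _), Real.sqrt_sq (by positivity)]

end ShearCutoff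

section LamOneZero

variable {ω Cs Cp k δ : ℝ}

theorem Xcla_of_lam1_eq_zero (hk : k ≠ 0) (hlam1 : lam1 ω Cs k = 0) :
    Xcla ω Cs Cp k δ = 1 - Complex.exp (-lam2 ω Cp k * δ) := by
  have hk2 : (k : ℂ) ^ 2 ≠ 0 := pow_ne_zero 2 (Complex.ofReal_ne_zero.mpr hk)
  rw [Xcla, hlam1, zero_mul, add_zero, sub_zero, div_self hk2, one_mul, neg_zero, zero_mul,
    Complex.exp_zero]

theorem Ycla_of_lam1_eq_zero (hlam1 : lam1 ω Cs k = 0) :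
    Ycla ω Cs Cp k δ = Complex.exp (-lam2 ω Cp k * δ) := by
  rw [Ycla, hlam1, zero_add, mul_comm, neg_mul_comm]

theorem Qcla_eq_zero_iff_of_lam1_eq_zero (hk : k ≠ 0) (hlam1 : lam1 ω Cs k = 0) (z : ℂ) :
    Qcla ω Cs Cp k δ z = 0 ↔ z = 1 ∨ z = Complex.exp (-2 * lam2 ω Cp k * δ) := by
  have hsq : Complex.exp (-2 * lam2 ω Cp k * δ) = Complex.exp (-lam2 ω Cp k * δ) ^ 2 := by
    rw [← Complex.exp_nat_mul]
    ring_nf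
  rw [Qcla, Xcla_of_lam1_eq_zero hk hlam1, Ycla_of_lam1_eq_zero hlam1, hsq]
  exact sq_sub_one_sub_sq_add_two_mul_add_sq_eq_zero_iff _ z

end LamOneZero

theorem classical_schwarz_shear_cutoff_stagnation_general
    (ω Cs Cp k δ : ℝ)
    (hω : 0 < ω) (hCs : 0 < Cs) (hCsCp : Cs < Cp)
    (hk : k = ω / Cs) (hδ : 0 < δ) :
    0 < ω * Real.sqrt (Cp ^ 2 - Cs ^ 2) / (Cp * Cs) ∧
    lam1 ω Cs k = 0 ∧
    lam2 ω Cp k = ((ω * Real.sqrt (Cp ^ 2 - Cs ^ 2) / (Cp * Cs) : ℝ) : ℂ) ∧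
    (∀ z : ℂ, Qcla ω Cs Cp k δ z = 0 ↔
      z = 1 ∨
      z = Complex.exp (-2 * ((ω * Real.sqrt (Cp ^ 2 - Cs ^ 2) / (Cp * Cs) : ℝ) : ℂ) * (δ : ℂ))) ∧
    0 < Real.exp (-2 * (ω * Real.sqrt (Cp ^ 2 - Cs ^ 2) / (Cp * Cs)) * δ) ∧
    Real.exp (-2 * (ω * Real.sqrt (Cp ^ 2 - Cs ^ 2) / (Cp * Cs)) * δ) < 1 := by
  subst hk
  have hL := shear_cutoff_lam2_pos hω hCs hCsCp
  have hlam1 := lam1_shear_cutoff ω Cs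
  have hlam2 := lam2_shear_cutoff hω.le hCs hCsCp.le
  have hcutoff : ω / Cs ≠ 0 := by positivity
  refine ⟨hL, hlam1, hlam2, fun z => ?_, Real.exp_pos _, Real.exp_lt_one_iff.mpr ?_⟩
  · rw [Qcla_eq_zero_iff_of_lam1_eq_zero hcutoff hlam1, hlam2]
  · nlinarith

/-- **Theorem 2.2, k = ω/Cs**: at the shear-wave cutoff one has `λ₁ = 0` and
`λ₂ = ω√(Cp² − Cs²)/(Cp·Cs) > 0`, and for every overlap `δ > 0` the two roots of
`Q(z) = z² − (X² + 2Y)z + Y²` are exactly `1` and `e^{−2λ₂δ}`; in particular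
`ρ_cla(ω/Cs) = max(1, e^{−2λ₂δ}) = 1` while `0 < e^{−2λ₂δ} < 1`. -/
theorem classical_schwarz_shear_cutoff_stagnation
    (ω Cs Cp k δ : ℝ)
    (hω : 0 < ω) (hCs : 0 < Cs) (hCsCp : Cs < Cp) (hCp2 : 2 * Cs ^ 2 < Cp ^ 2)
    (hk : k = ω / Cs) (hδ : 0 < δ) :
    0 < ω * Real.sqrt (Cp ^ 2 - Cs ^ 2) / (Cp * Cs) ∧
    lam1 ω Cs k = 0 ∧
    lam2 ω Cp k = ((ω * Real.sqrt (Cp ^ 2 - Cs ^ 2) / (Cp * Cs) : ℝ) : ℂ) ∧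
    (∀ z : ℂ, Qcla ω Cs Cp k δ z = 0 ↔
      z = 1 ∨
      z = Complex.exp (-2 * ((ω * Real.sqrt (Cp ^ 2 - Cs ^ 2) / (Cp * Cs) : ℝ) : ℂ) * (δ : ℂ))) ∧
    0 < Real.exp (-2 * (ω * Real.sqrt (Cp ^ 2 - Cs ^ 2) / (Cp * Cs)) * δ) ∧
    Real.exp (-2 * (ω * Real.sqrt (Cp ^ 2 - Cs ^ 2) / (Cp * Cs)) * δ) < 1 :=
  classical_schwarz_shear_cutoff_stagnation_general ω Cs Cp k δ hω hCs hCsCp hk hδ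

end
end

section
/- Strict positivity of (Z₁+Z₂)² − λ₁λ₂K² in the high-frequency regime (claim (remark1) in the proof of Theorem 3.4): for every Fourier frequency k > ω/Cs, with λ₁ = √(k² − ω²/Cs²) > 0 and λ₂ = √(k² − ω²/Cp²) > 0 real, one has Z₁ + Z₂ > 0 and (Z₁ + Z₂)² − λ₁λ₂K² > 0, i.e. Z₁ + Z₂ > √(λ₁λ₂)·K. -/
/-!
With `p = √(λ₁λ₂)`, the identity `p² = λ₁λ₂` turns `Z₁ + Z₂ − pK` into the sum of squares
`Cp ω² (k − p)² + Cs³ (k² + λ₁² − 2kp)²`. Both `λ₁` and `λ₂` lie in `(0, k)`, so `p < k` and the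
first square is strictly positive. Squaring `pK < Z₁ + Z₂` gives the claim on `(Z₁ + Z₂)² − λ₁λ₂K²`.
-/

lemma sqrt_sq_sub_div_sq_pos {ω c k : ℝ} (hω : 0 ≤ ω) (hc : 0 < c) (hk : ω / c < k) :
    0 < √(k ^ 2 - ω ^ 2 / c ^ 2) := by
  have : (ω / c) ^ 2 < k ^ 2 := pow_lt_pow_left₀ hk (div_nonneg hω hc.le) two_ne_zero
  rw [div_pow] at this
  exact Real.sqrt_pos.mpr (sub_pos.mpr this)

lemma sqrt_sq_sub_div_sq_lt {ω c k : ℝ} (hω : ω ≠ 0) (hc : c ≠ 0) (hk : 0 < k) :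
    √(k ^ 2 - ω ^ 2 / c ^ 2) < k := by
  have : 0 < ω ^ 2 / c ^ 2 := by positivity
  exact (Real.sqrt_lt' hk).mpr (by linarith)

section Symbol

variable {α β k s t : ℝ}

lemma Z_sub_mul_K_eq_sum_sq {p : ℝ} (hp : p ^ 2 = s * t) :
    (β * (k ^ 2 + s ^ 2) ^ 2 + α * k ^ 2) + (4 * β * k ^ 2 + α) * s * t
        - p * (2 * k * (α + 2 * β * (k ^ 2 + s ^ 2)))
      = α * (k - p) ^ 2 + β * (k ^ 2 + s ^ 2 - 2 * k * p) ^ 2 := by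
  linear_combination (-(4 * β * k ^ 2) - α) * hp

variable (hα : 0 < α) (hβ : 0 ≤ β) (hs : 0 ≤ s) (ht : 0 ≤ t) (hsk : s < k) (htk : t < k)
include hα hβ hs ht hsk htk

lemma sqrt_mul_mul_K_lt_Z :
    √(s * t) * (2 * k * (α + 2 * β * (k ^ 2 + s ^ 2)))
      < (β * (k ^ 2 + s ^ 2) ^ 2 + α * k ^ 2) + (4 * β * k ^ 2 + α) * s * t := by
  have hpk : √(s * t) < k := (Real.sqrt_lt' (hs.trans_lt hsk)).mpr (by nlinarith)
  have hgap := Z_sub_mul_K_eq_sum_sq (α := α) (β := β) (k := k)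
    (Real.sq_sqrt (mul_nonneg hs ht))
  have : 0 < α * (k - √(s * t)) ^ 2 := mul_pos hα (pow_pos (sub_pos.mpr hpk) 2)
  nlinarith [mul_nonneg hβ (sq_nonneg (k ^ 2 + s ^ 2 - 2 * k * √(s * t)))]

lemma mul_mul_K_sq_lt_Z_sq :
    s * t * (2 * k * (α + 2 * β * (k ^ 2 + s ^ 2))) ^ 2
      < ((β * (k ^ 2 + s ^ 2) ^ 2 + α * k ^ 2) + (4 * β * k ^ 2 + α) * s * t) ^ 2 := by
  have hK : 0 ≤ 2 * k * (α + 2 * β * (k ^ 2 + s ^ 2)) := by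
    have := hs.trans_lt hsk
    positivity
  calc s * t * (2 * k * (α + 2 * β * (k ^ 2 + s ^ 2))) ^ 2
      = (√(s * t) * (2 * k * (α + 2 * β * (k ^ 2 + s ^ 2)))) ^ 2 := by
        rw [mul_pow (√(s * t)), Real.sq_sqrt (mul_nonneg hs ht)]
    _ < _ := pow_lt_pow_left₀ (sqrt_mul_mul_K_lt_Z hα hβ hs ht hsk htk)
        (mul_nonneg (Real.sqrt_nonneg _) hK) two_ne_zero

end Symbol

theorem remark1_positivity_general
    (ω Cs Cp k : ℝ)
    (hω : 0 < ω) (hCs : 0 < Cs) (hCsCp : Cs < Cp)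
    (hk : ω / Cs < k) :
    0 < Real.sqrt (k ^ 2 - ω ^ 2 / Cs ^ 2) ∧
    0 < Real.sqrt (k ^ 2 - ω ^ 2 / Cp ^ 2) ∧
    0 < (Cs ^ 3 * (k ^ 2 + Real.sqrt (k ^ 2 - ω ^ 2 / Cs ^ 2) ^ 2) ^ 2 + ω ^ 2 * Cp * k ^ 2)
        + (4 * Cs ^ 3 * k ^ 2 + Cp * ω ^ 2) * Real.sqrt (k ^ 2 - ω ^ 2 / Cs ^ 2)
            * Real.sqrt (k ^ 2 - ω ^ 2 / Cp ^ 2) ∧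
    0 < ((Cs ^ 3 * (k ^ 2 + Real.sqrt (k ^ 2 - ω ^ 2 / Cs ^ 2) ^ 2) ^ 2 + ω ^ 2 * Cp * k ^ 2)
          + (4 * Cs ^ 3 * k ^ 2 + Cp * ω ^ 2) * Real.sqrt (k ^ 2 - ω ^ 2 / Cs ^ 2)
              * Real.sqrt (k ^ 2 - ω ^ 2 / Cp ^ 2)) ^ 2
        - Real.sqrt (k ^ 2 - ω ^ 2 / Cs ^ 2) * Real.sqrt (k ^ 2 - ω ^ 2 / Cp ^ 2)
            * (2 * k * (Cp * ω ^ 2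
                + 2 * Cs ^ 3 * (k ^ 2 + Real.sqrt (k ^ 2 - ω ^ 2 / Cs ^ 2) ^ 2))) ^ 2 ∧
    Real.sqrt (Real.sqrt (k ^ 2 - ω ^ 2 / Cs ^ 2) * Real.sqrt (k ^ 2 - ω ^ 2 / Cp ^ 2))
          * (2 * k * (Cp * ω ^ 2
              + 2 * Cs ^ 3 * (k ^ 2 + Real.sqrt (k ^ 2 - ω ^ 2 / Cs ^ 2) ^ 2)))
        < (Cs ^ 3 * (k ^ 2 + Real.sqrt (k ^ 2 - ω ^ 2 / Cs ^ 2) ^ 2) ^ 2 + ω ^ 2 * Cp * k ^ 2)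
          + (4 * Cs ^ 3 * k ^ 2 + Cp * ω ^ 2) * Real.sqrt (k ^ 2 - ω ^ 2 / Cs ^ 2)
              * Real.sqrt (k ^ 2 - ω ^ 2 / Cp ^ 2) := by
  have hCp : 0 < Cp := hCs.trans hCsCp
  have hk0 : 0 < k := (div_pos hω hCs).trans hk
  have hkCp : ω / Cp < k := (div_le_div_of_nonneg_left hω.le hCs hCsCp.le).trans_lt hk
  have hl₁ := sqrt_sq_sub_div_sq_pos hω.le hCs hk
  have hl₂ := sqrt_sq_sub_div_sq_pos hω.le hCp hkCp
  have hα : 0 < Cp * ω ^ 2 := by positivity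
  have hβ : 0 ≤ Cs ^ 3 := by positivity
  have hl₁k := sqrt_sq_sub_div_sq_lt hω.ne' hCs.ne' hk0
  have hl₂k := sqrt_sq_sub_div_sq_lt hω.ne' hCp.ne' hk0
  have hlt := sqrt_mul_mul_K_lt_Z hα hβ hl₁.le hl₂.le hl₁k hl₂k
  have hsq := mul_mul_K_sq_lt_Z_sq hα hβ hl₁.le hl₂.le hl₁k hl₂k
  rw [mul_comm (ω ^ 2) Cp]
  refine ⟨hl₁, hl₂, ?_, sub_pos.mpr hsq, hlt⟩
  exact lt_of_le_of_lt (by positivity) hlt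

/-- Strict positivity of `(Z₁+Z₂)² − λ₁λ₂K²` in the high-frequency regime (claim (remark1)
in the proof of Theorem 3.4): for `k > ω/Cs`, with `λ₁ = √(k² − ω²/Cs²) > 0` and
`λ₂ = √(k² − ω²/Cp²) > 0`, one has `Z₁ + Z₂ > 0` and `(Z₁ + Z₂)² − λ₁λ₂K² > 0`, i.e.
`Z₁ + Z₂ > √(λ₁λ₂)·K`. -/
theorem remark1_positivity
    (ω Cs Cp k : ℝ)
    (hω : 0 < ω) (hCs : 0 < Cs) (hCsCp : Cs < Cp) (hCp2 : 2 * Cs ^ 2 < Cp ^ 2)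
    (hk : ω / Cs < k) :
    0 < Real.sqrt (k ^ 2 - ω ^ 2 / Cs ^ 2) ∧
    0 < Real.sqrt (k ^ 2 - ω ^ 2 / Cp ^ 2) ∧
    0 < (Cs ^ 3 * (k ^ 2 + Real.sqrt (k ^ 2 - ω ^ 2 / Cs ^ 2) ^ 2) ^ 2 + ω ^ 2 * Cp * k ^ 2)
        + (4 * Cs ^ 3 * k ^ 2 + Cp * ω ^ 2) * Real.sqrt (k ^ 2 - ω ^ 2 / Cs ^ 2)
            * Real.sqrt (k ^ 2 - ω ^ 2 / Cp ^ 2) ∧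
    0 < ((Cs ^ 3 * (k ^ 2 + Real.sqrt (k ^ 2 - ω ^ 2 / Cs ^ 2) ^ 2) ^ 2 + ω ^ 2 * Cp * k ^ 2)
          + (4 * Cs ^ 3 * k ^ 2 + Cp * ω ^ 2) * Real.sqrt (k ^ 2 - ω ^ 2 / Cs ^ 2)
              * Real.sqrt (k ^ 2 - ω ^ 2 / Cp ^ 2)) ^ 2
        - Real.sqrt (k ^ 2 - ω ^ 2 / Cs ^ 2) * Real.sqrt (k ^ 2 - ω ^ 2 / Cp ^ 2)
            * (2 * k * (Cp * ω ^ 2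
                + 2 * Cs ^ 3 * (k ^ 2 + Real.sqrt (k ^ 2 - ω ^ 2 / Cs ^ 2) ^ 2))) ^ 2 ∧
    Real.sqrt (Real.sqrt (k ^ 2 - ω ^ 2 / Cs ^ 2) * Real.sqrt (k ^ 2 - ω ^ 2 / Cp ^ 2))
          * (2 * k * (Cp * ω ^ 2
              + 2 * Cs ^ 3 * (k ^ 2 + Real.sqrt (k ^ 2 - ω ^ 2 / Cs ^ 2) ^ 2)))
        < (Cs ^ 3 * (k ^ 2 + Real.sqrt (k ^ 2 - ω ^ 2 / Cs ^ 2) ^ 2) ^ 2 + ω ^ 2 * Cp * k ^ 2)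
          + (4 * Cs ^ 3 * k ^ 2 + Cp * ω ^ 2) * Real.sqrt (k ^ 2 - ω ^ 2 / Cs ^ 2)
              * Real.sqrt (k ^ 2 - ω ^ 2 / Cp ^ 2) :=
  remark1_positivity_general ω Cs Cp k hω hCs hCsCp hk
end

section
/- Negativity of the divergence indicator just above the shear cutoff (key step in the proof of Theorem 3.4): define for k ≥ ω/Cs the real quantity g̃(k) = 2(Z₁ + Z₂) − K(λ₁ + λ₂), where λ₁ = √(k² − ω²/Cs²) ≥ 0 and λ₂ = √(k² − ω²/Cp²) > 0. Then g̃(ω/Cs) = (2ω⁴/(Cp·Cs²))·(Cp(Cp + Cs) − (Cp + 2Cs)√(Cp² − Cs²)) < 0 (the inequality Cp(Cp + Cs) < (Cp + 2Cs)√(Cp² − Cs²) holding because Cp² > 2Cs²), and consequently there exists ε > 0 such that g̃(k) < 0 for all k with ω/Cs ≤ k < ω/Cs + ε. -/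
/-!
At the shear cutoff `k = ω/Cs` the root `λ₁` vanishes and `λ₂ = ω√(Cp² − Cs²)/(Cs·Cp)`, so `g̃(ω/Cs)`
is an explicit multiple of `Cp(Cp + Cs) − (Cp + 2Cs)√(Cp² − Cs²)`. Squaring, the difference
`(Cp + 2Cs)²(Cp² − Cs²) − Cp²(Cp + Cs)²` factors as `2Cs(Cp + Cs)(Cp² − 2Cs²) > 0`, so this value
is negative, and continuity of `g̃` keeps it negative on a right neighbourhood of the cutoff.
-/

open Set

noncomputable def divergenceIndicator (ω Cs Cp k : ℝ) : ℝ :=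
  2 * ((Cs ^ 3 * (k ^ 2 + Real.sqrt (k ^ 2 - ω ^ 2 / Cs ^ 2) ^ 2) ^ 2
        + ω ^ 2 * Cp * k ^ 2)
      + (4 * Cs ^ 3 * k ^ 2 + Cp * ω ^ 2) * Real.sqrt (k ^ 2 - ω ^ 2 / Cs ^ 2)
          * Real.sqrt (k ^ 2 - ω ^ 2 / Cp ^ 2))
    - 2 * k * (Cp * ω ^ 2 + 2 * Cs ^ 3 * (k ^ 2 + Real.sqrt (k ^ 2 - ω ^ 2 / Cs ^ 2) ^ 2))
        * (Real.sqrt (k ^ 2 - ω ^ 2 / Cs ^ 2) + Real.sqrt (k ^ 2 - ω ^ 2 / Cp ^ 2))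

theorem continuous_divergenceIndicator (ω Cs Cp : ℝ) :
    Continuous (divergenceIndicator ω Cs Cp) := by
  unfold divergenceIndicator
  fun_prop

theorem Real.sqrt_div_sq_sub_sq_div_sq {a b c : ℝ} (ha : 0 ≤ a) (hb : 0 < b) (hc : 0 < c) :
    Real.sqrt ((a / b) ^ 2 - a ^ 2 / c ^ 2) = a * Real.sqrt (c ^ 2 - b ^ 2) / (b * c) := by
  have hsplit : (a / b) ^ 2 - a ^ 2 / c ^ 2 = (a / (b * c)) ^ 2 * (c ^ 2 - b ^ 2) := by
    field_simp
  rw [hsplit, Real.sqrt_mul (by positivity), Real.sqrt_sq (by positivity)]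
  ring

theorem divergenceIndicator_shear_cutoff {ω Cs Cp : ℝ} (hω : 0 ≤ ω) (hCs : 0 < Cs)
    (hCp : 0 < Cp) :
    divergenceIndicator ω Cs Cp (ω / Cs) = (2 * ω ^ 4 / (Cp * Cs ^ 2)) *
      (Cp * (Cp + Cs) - (Cp + 2 * Cs) * Real.sqrt (Cp ^ 2 - Cs ^ 2)) := by
  have hshear : Real.sqrt ((ω / Cs) ^ 2 - ω ^ 2 / Cs ^ 2) = 0 := by
    rw [div_pow, sub_self, Real.sqrt_zero]
  unfold divergenceIndicator
  rw [hshear, Real.sqrt_div_sq_sub_sq_div_sq hω hCs hCp]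
  field_simp
  ring

theorem mul_add_lt_add_two_mul_mul_sqrt {Cs Cp : ℝ} (hCs : 0 < Cs) (hCp : 0 < Cp)
    (hCp2 : 2 * Cs ^ 2 < Cp ^ 2) :
    Cp * (Cp + Cs) < (Cp + 2 * Cs) * Real.sqrt (Cp ^ 2 - Cs ^ 2) := by
  have hroot : Real.sqrt (Cp ^ 2 - Cs ^ 2) ^ 2 = Cp ^ 2 - Cs ^ 2 :=
    Real.sq_sqrt (by nlinarith)
  have hdiff : ((Cp + 2 * Cs) * Real.sqrt (Cp ^ 2 - Cs ^ 2)) ^ 2 - (Cp * (Cp + Cs)) ^ 2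
      = 2 * Cs * (Cp + Cs) * (Cp ^ 2 - 2 * Cs ^ 2) := by
    rw [mul_pow, hroot]
    ring
  have hpos : 0 < 2 * Cs * (Cp + Cs) * (Cp ^ 2 - 2 * Cs ^ 2) := by
    have : 0 < Cp ^ 2 - 2 * Cs ^ 2 := sub_pos.2 hCp2
    positivity
  exact lt_of_pow_lt_pow_left₀ 2 (by positivity) (by linarith)

theorem exists_pos_forall_neg_of_continuousWithinAt_Ici {f : ℝ → ℝ} {a : ℝ}
    (hf : ContinuousWithinAt f (Ici a) a) (ha : f a < 0) :
    ∃ ε > 0, ∀ x, a ≤ x → x < a + ε → f x < 0 := by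
  obtain ⟨u, hau, hu⟩ := mem_nhdsGE_iff_exists_Ico_subset.1 (hf.eventually (gt_mem_nhds ha))
  exact ⟨u - a, sub_pos.2 hau, fun x hax hxu => hu ⟨hax, by linarith⟩⟩

/-- Negativity of the divergence indicator just above the shear cutoff (key step in the
proof of Theorem 3.4): define, for `k ≥ ω/Cs`,
`g̃(k) = 2(Z₁ + Z₂) − K(λ₁ + λ₂)` where `λ₁ = √(k² − ω²/Cs²) ≥ 0`,
`λ₂ = √(k² − ω²/Cp²) > 0`, `Z₁ = Cs³(k² + λ₁²)² + ω²Cp·k²`, `Z₂ = (4Cs³k² + Cpω²)λ₁λ₂` and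
`K = 2k(Cpω² + 2Cs³(k² + λ₁²))`. Then
`g̃(ω/Cs) = (2ω⁴/(Cp·Cs²))·(Cp(Cp + Cs) − (Cp + 2Cs)√(Cp² − Cs²)) < 0` (the inequality
`Cp(Cp + Cs) < (Cp + 2Cs)√(Cp² − Cs²)` holding because `Cp² > 2Cs²`), and consequently there
is `ε > 0` with `g̃(k) < 0` for all `ω/Cs ≤ k < ω/Cs + ε`. -/
theorem divergence_indicator_negative_above_shear_cutoff
    (ω Cs Cp : ℝ)
    (hω : 0 < ω) (hCs : 0 < Cs) (hCsCp : Cs < Cp) (hCp2 : 2 * Cs ^ 2 < Cp ^ 2) :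
    let gt : ℝ → ℝ := fun k =>
      2 * ((Cs ^ 3 * (k ^ 2 + Real.sqrt (k ^ 2 - ω ^ 2 / Cs ^ 2) ^ 2) ^ 2
            + ω ^ 2 * Cp * k ^ 2)
          + (4 * Cs ^ 3 * k ^ 2 + Cp * ω ^ 2) * Real.sqrt (k ^ 2 - ω ^ 2 / Cs ^ 2)
              * Real.sqrt (k ^ 2 - ω ^ 2 / Cp ^ 2))
        - 2 * k * (Cp * ω ^ 2 + 2 * Cs ^ 3 * (k ^ 2 + Real.sqrt (k ^ 2 - ω ^ 2 / Cs ^ 2) ^ 2))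
            * (Real.sqrt (k ^ 2 - ω ^ 2 / Cs ^ 2) + Real.sqrt (k ^ 2 - ω ^ 2 / Cp ^ 2))
    gt (ω / Cs) = (2 * ω ^ 4 / (Cp * Cs ^ 2)) *
        (Cp * (Cp + Cs) - (Cp + 2 * Cs) * Real.sqrt (Cp ^ 2 - Cs ^ 2)) ∧
    Cp * (Cp + Cs) < (Cp + 2 * Cs) * Real.sqrt (Cp ^ 2 - Cs ^ 2) ∧
    gt (ω / Cs) < 0 ∧
    ∃ ε > 0, ∀ k : ℝ, ω / Cs ≤ k → k < ω / Cs + ε → gt k < 0 := by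
  intro gt
  have hCp : 0 < Cp := hCs.trans hCsCp
  have hval := divergenceIndicator_shear_cutoff hω.le hCs hCp
  have hineq := mul_add_lt_add_two_mul_mul_sqrt hCs hCp hCp2
  have hneg : divergenceIndicator ω Cs Cp (ω / Cs) < 0 := by
    rw [hval]
    exact mul_neg_of_pos_of_neg (by positivity) (sub_neg.2 hineq)
  exact ⟨hval, hineq, hneg, exists_pos_forall_neg_of_continuousWithinAt_Ici
    (continuous_divergenceIndicator ω Cs Cp).continuousWithinAt hneg⟩
end
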